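/- For every natural number q ≥ 1, the group presented by ⟨x, y | x = [x⁻¹, y⁻¹], y = [y⁻¹, x^(−q)]⟩ is the trivial group, where [a,b] = aba⁻¹b⁻¹. -/

import Mathlib

/-!
Write `a, b` for the images of `x, y`. The first relation says `b⁻¹ a b = a²`, so
`aᵐ b = b a²ᵐ` for every `m`. Pushing `aⁿ` through `b²` this way gives `aⁿ b² = b² a⁴ⁿ`, while
the second relation reads `aⁿ b² = b aⁿ`; hence `b = a⁻³ⁿ`. Then `a` and `b` commute, so
`a = b⁻¹ a b = a²` forces `a = 1`, and `b = 1` follows.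
-/

open scoped commutatorElement

theorem PresentedGroup.subsingleton_of_forall_of_eq_one {α : Type*} {rels : Set (FreeGroup α)}
    (h : ∀ x : α, (of x : PresentedGroup rels) = 1) : Subsingleton (PresentedGroup rels) :=
  subsingleton_of_forall_eq 1 fun g =>
    Subgroup.mem_bot.mp (generated_by rels ⊥ (fun x => Subgroup.mem_bot.mpr (h x)) g)

namespace Gordon

variable {G : Type*} [Group G] {a b : G}

theorem conj_eq_sq (h : a = ⁅a⁻¹, b⁻¹⁆) : b⁻¹ * a * b = a ^ 2 := by
  rw [commutatorElement_def, inv_inv, inv_inv] at h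
  calc b⁻¹ * a * b = a * (a⁻¹ * b⁻¹ * a * b) := by group
    _ = a ^ 2 := by rw [← h, sq]

theorem zpow_mul_eq_mul_zpow (h : a = ⁅a⁻¹, b⁻¹⁆) (m : ℤ) : a ^ m * b = b * a ^ (2 * m) := by
  have hconj : b⁻¹ * a ^ m * b = a ^ (2 * m) := by
    rw [zpow_mul, zpow_two, ← sq, ← conj_eq_sq h]
    simpa using (conj_zpow (a := b⁻¹) (b := a) (i := m)).symm
  calc a ^ m * b = b * (b⁻¹ * a ^ m * b) := by group
    _ = b * a ^ (2 * m) := by rw [hconj]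

theorem eq_zpow (n : ℤ) (h₁ : a = ⁅a⁻¹, b⁻¹⁆) (h₂ : b = ⁅b⁻¹, a ^ (-n)⁆) :
    b = a ^ (-3 * n) := by
  rw [commutatorElement_def, inv_inv, ← zpow_neg, neg_neg] at h₂
  have hsecond : a ^ n * (b * b) = b * a ^ n := by
    calc a ^ n * (b * b) = a ^ n * (b * (b⁻¹ * a ^ (-n) * b * a ^ n)) := by rw [← h₂]
      _ = b * a ^ n := by group
  have hfirst : a ^ n * (b * b) = b * b * a ^ (4 * n) := by
    calc a ^ n * (b * b) = a ^ n * b * b := by group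
      _ = b * (a ^ (2 * n) * b) := by rw [zpow_mul_eq_mul_zpow h₁]; group
      _ = b * b * a ^ (4 * n) := by rw [zpow_mul_eq_mul_zpow h₁, ← mul_assoc, ← mul_assoc]; ring_nf
  have hb : b * a ^ (4 * n) = a ^ n := by
    refine mul_left_cancel (a := b) ?_
    rw [← mul_assoc, ← hfirst, hsecond]
  calc b = a ^ n * (a ^ (4 * n))⁻¹ := by rw [← hb]; group
    _ = a ^ (-3 * n) := by rw [← zpow_neg, ← zpow_add]; ring_nf

theorem eq_one (n : ℤ) (h₁ : a = ⁅a⁻¹, b⁻¹⁆) (h₂ : b = ⁅b⁻¹, a ^ (-n)⁆) : a = 1 ∧ b = 1 := by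
  have hb := eq_zpow n h₁ h₂
  have hcomm : Commute a b := hb ▸ (Commute.refl a).zpow_right _
  have ha : a = 1 := by
    have hsq : a * a = a * 1 := by
      rw [mul_one, ← sq, ← conj_eq_sq h₁, mul_assoc, hcomm.eq, inv_mul_cancel_left]
    exact mul_left_cancel hsq
  exact ⟨ha, by rw [hb, ha, one_zpow]⟩

-- The generators are `x = of true` and `y = of false`.
open FreeGroup in
def rels (n : ℤ) : Set (FreeGroup Bool) :=
  {of true * ⁅(of true)⁻¹, (of false)⁻¹⁆⁻¹, of false * ⁅(of false)⁻¹, of true ^ (-n)⁆⁻¹}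

theorem subsingleton_presentedGroup_rels (n : ℤ) : Subsingleton (PresentedGroup (rels n)) := by
  have h₁ := PresentedGroup.mk_eq_mk_of_mul_inv_mem (rels := rels n) (Set.mem_insert _ _)
  have h₂ := PresentedGroup.mk_eq_mk_of_mul_inv_mem (rels := rels n) (Set.mem_insert_of_mem _ rfl)
  simp only [map_commutatorElement, map_inv, map_zpow] at h₁ h₂
  obtain ⟨hx, hy⟩ := eq_one n h₁ h₂
  refine PresentedGroup.subsingleton_of_forall_of_eq_one ?_
  rintro (_ | _)
  exacts [hy, hx]

end Gordon

theorem stmt_2_general (q : ℕ) :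
    Subsingleton (PresentedGroup
      ({FreeGroup.of true * ⁅(FreeGroup.of true)⁻¹, (FreeGroup.of false)⁻¹⁆⁻¹,
        FreeGroup.of false *
          ⁅(FreeGroup.of false)⁻¹, FreeGroup.of true ^ (-(q : ℤ))⁆⁻¹} :
        Set (FreeGroup Bool))) := by
  exact Gordon.subsingleton_presentedGroup_rels q

/-- For every q ≥ 1, Gordon's presentation ⟨x, y | x = [x⁻¹, y⁻¹], y = [y⁻¹, x⁻ᑫ]⟩
presents the trivial group, where [a, b] = aba⁻¹b⁻¹. -/
theorem stmt_2 (q : ℕ) (hq : 1 ≤ q) :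
    Subsingleton (PresentedGroup
      ({FreeGroup.of true * ⁅(FreeGroup.of true)⁻¹, (FreeGroup.of false)⁻¹⁆⁻¹,
        FreeGroup.of false *
          ⁅(FreeGroup.of false)⁻¹, FreeGroup.of true ^ (-(q : ℤ))⁆⁻¹} :
        Set (FreeGroup Bool))) :=
  stmt_2_general q
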